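/- Let u be a C³ solution of Δu = F'(u) on ℝ² with ∂_y u > 0 on ℝ², and suppose ∂_x u is bounded with sup_{R ≤ |x| ≤ 2R} |∂_x u| → 0 as R → ∞. Then ∂_x u = c ∂_y u for a constant c on ℝ². -/

import Mathlib

open Real

noncomputable def pdx (f : ℝ × ℝ → ℝ) (p : ℝ × ℝ) : ℝ := deriv (fun t => f (t, p.2)) p.1
noncomputable def pdy (f : ℝ × ℝ → ℝ) (p : ℝ × ℝ) : ℝ := deriv (fun t => f (p.1, t)) p.2
noncomputable def lap (f : ℝ × ℝ → ℝ) (p : ℝ × ℝ) : ℝ := pdx (pdx f) p + pdy (pdy f) p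

noncomputable def dist2 (p q : ℝ × ℝ) : ℝ := Real.sqrt ((p.1 - q.1) ^ 2 + (p.2 - q.2) ^ 2)

open MeasureTheory Set
example (a b : ℝ×ℝ) : volume (Icc a b) = ENNReal.ofReal (b.1-a.1) * ENNReal.ofReal (b.2-a.2) := by
  rw [Icc_prod_eq]
  rw [show (volume : Measure (ℝ×ℝ)) = (volume : Measure ℝ).prod volume from rfl]
  rw [Measure.prod_prod, Real.volume_Icc, Real.volume_Icc]

noncomputable def Dd (v : ℝ×ℝ) (f : ℝ×ℝ → ℝ) : ℝ×ℝ → ℝ := fun p => fderiv ℝ f p v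

-- product rule
theorem Dd_mul {f g : ℝ×ℝ → ℝ} {p v : ℝ×ℝ} (hf : DifferentiableAt ℝ f p) (hg : DifferentiableAt ℝ g p) :
    Dd v (fun q => f q * g q) p = f p * Dd v g p + g p * Dd v f p := by
  simp only [Dd, fderiv_fun_mul hf hg, ContinuousLinearMap.add_apply, ContinuousLinearMap.smul_apply,
    smul_eq_mul]

theorem Dd_add {f g : ℝ×ℝ → ℝ} {p v : ℝ×ℝ} (hf : DifferentiableAt ℝ f p) (hg : DifferentiableAt ℝ g p) :
    Dd v (fun q => f q + g q) p = Dd v f p + Dd v g p := by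
  simp [Dd, fderiv_fun_add hf hg]

theorem Dd_comp {g : ℝ → ℝ} {f : ℝ×ℝ → ℝ} {p v : ℝ×ℝ} (hg : DifferentiableAt ℝ g (f p))
    (hf : DifferentiableAt ℝ f p) :
    Dd v (fun q => g (f q)) p = deriv g (f p) * Dd v f p := by
  have := (hg.hasDerivAt.comp_hasFDerivAt p hf.hasFDerivAt).fderiv
  simp only [Dd, Function.comp_def] at this ⊢
  rw [this]; simp

theorem Dd_contDiff {f : ℝ×ℝ → ℝ} {v : ℝ×ℝ} {n m : ℕ} (hmn : m + 1 ≤ n) (hf : ContDiff ℝ n f) :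
    ContDiff ℝ m (Dd v f) := by
  have h1 : ContDiff ℝ m (fderiv ℝ f) := hf.fderiv_right (by exact_mod_cast (by exact_mod_cast Nat.cast_le.2 hmn : (m:ℕ∞)+1 ≤ (n:ℕ∞)))
  exact h1.clm_apply contDiff_const

theorem Dd_differentiable {f : ℝ×ℝ → ℝ} {v : ℝ×ℝ} {n : ℕ} (hn : 2 ≤ n) (hf : ContDiff ℝ n f) :
    Differentiable ℝ (Dd v f) := by
  have := Dd_contDiff (v := v) (n := n) (m := 1) hn hf
  exact this.differentiable (by norm_num)

theorem Dd_continuous {f : ℝ×ℝ → ℝ} {v : ℝ×ℝ} {n : ℕ} (hn : 1 ≤ n) (hf : ContDiff ℝ n f) :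
    Continuous (Dd v f) := by
  have : ContDiff ℝ 0 (Dd v f) := Dd_contDiff (by exact_mod_cast hn) hf
  exact this.continuous

-- Clairaut
theorem Dd_comm {f : ℝ×ℝ → ℝ} (hf : ContDiff ℝ 2 f) (v w p : ℝ×ℝ) :
    Dd v (Dd w f) p = Dd w (Dd v f) p := by
  have hd : Differentiable ℝ f := hf.differentiable (by norm_num)
  have hfd : ContDiff ℝ 1 (fderiv ℝ f) := hf.fderiv_right (by norm_num)
  have hsymm := second_derivative_symmetric (f := f) (f' := fderiv ℝ f)
    (f'' := fderiv ℝ (fderiv ℝ f) p) (fun y => (hd y).hasFDerivAt)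
    ((hfd.differentiable (by norm_num) p).hasFDerivAt)
  have key : ∀ z : ℝ×ℝ, Dd z f = fun q => (ContinuousLinearMap.apply ℝ ℝ z) (fderiv ℝ f q) := by
    intro z; rfl
  have happ : ∀ z : ℝ×ℝ, fderiv ℝ (Dd z f) p = (ContinuousLinearMap.apply ℝ ℝ z).comp (fderiv ℝ (fderiv ℝ f) p) := by
    intro z
    rw [key z]
    exact ((ContinuousLinearMap.apply ℝ ℝ z).hasFDerivAt.comp p (hfd.differentiable (by norm_num) p).hasFDerivAt).fderiv
  show fderiv ℝ (Dd w f) p v = fderiv ℝ (Dd v f) p w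
  rw [happ, happ]
  exact hsymm v w


theorem pdx_eq {f : ℝ×ℝ → ℝ} {p : ℝ×ℝ} (hf : DifferentiableAt ℝ f p) :
    pdx f p = Dd (1,0) f p := by
  have h1 : HasDerivAt (fun t : ℝ => (t, p.2)) ((1:ℝ),(0:ℝ)) p.1 := by
    have := ((hasDerivAt_id p.1).prodMk (hasDerivAt_const p.1 p.2))
    simpa using this
  have h2 : HasDerivAt (fun t => f (t, p.2)) (fderiv ℝ f p (1,0)) p.1 := by
    exact (hf.hasFDerivAt.comp_hasDerivAt p.1 h1)
  simpa [pdx, Dd] using h2.deriv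

theorem pdy_eq {f : ℝ×ℝ → ℝ} {p : ℝ×ℝ} (hf : DifferentiableAt ℝ f p) :
    pdy f p = Dd (0,1) f p := by
  have h1 : HasDerivAt (fun t : ℝ => (p.1, t)) ((0:ℝ),(1:ℝ)) p.2 := by
    have := ((hasDerivAt_const p.2 p.1).prodMk (hasDerivAt_id p.2))
    simpa using this
  have h2 : HasDerivAt (fun t => f (p.1, t)) (fderiv ℝ f p (0,1)) p.2 := by
    exact (hf.hasFDerivAt.comp_hasDerivAt p.2 h1)
  simpa [pdy, Dd] using h2.deriv

theorem Dd_fst (v p : ℝ×ℝ) : Dd v (fun q => q.1) p = v.1 := by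
  simp [Dd, fderiv_fst]

theorem Dd_snd (v p : ℝ×ℝ) : Dd v (fun q => q.2) p = v.2 := by
  simp [Dd, fderiv_snd]

theorem Dd_const_mul {f : ℝ×ℝ → ℝ} {p v : ℝ×ℝ} (c : ℝ) (hf : DifferentiableAt ℝ f p) :
    Dd v (fun q => c * f q) p = c * Dd v f p := by
  simp [Dd, fderiv_const_mul hf c]

-- derivative of the argument function (p.1^2+p.2^2)/R^2
theorem Dd_arg (R : ℝ) (v p : ℝ×ℝ) :
    Dd v (fun q : ℝ×ℝ => (q.1^2 + q.2^2)/R^2) p = (2*p.1*v.1 + 2*p.2*v.2)/R^2 := by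
  have h1 : DifferentiableAt ℝ (fun q : ℝ×ℝ => q.1) p := differentiableAt_fst
  have h2 : DifferentiableAt ℝ (fun q : ℝ×ℝ => q.2) p := differentiableAt_snd
  have e : (fun q : ℝ×ℝ => (q.1^2 + q.2^2)/R^2)
      = fun q : ℝ×ℝ => (1/R^2) * (q.1*q.1 + q.2*q.2) := by
    funext q; ring
  rw [e, Dd_const_mul _ (by fun_prop), Dd_add (by fun_prop) (by fun_prop),
    Dd_mul h1 h1, Dd_mul h2 h2, Dd_fst, Dd_snd]
  ring

noncomputable def eta (s : ℝ) : ℝ := Real.smoothTransition ((4 - s)/3)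

theorem eta_contDiff : ContDiff ℝ (⊤:ℕ∞) eta := by
  exact Real.smoothTransition.contDiff.comp ((contDiff_const.sub contDiff_id).div_const 3)

theorem eta_one {s : ℝ} (hs : s ≤ 1) : eta s = 1 :=
  Real.smoothTransition.one_of_one_le (by rw [le_div_iff₀ (by norm_num : (0:ℝ) < 3)]; linarith)

theorem eta_zero {s : ℝ} (hs : 4 ≤ s) : eta s = 0 :=
  Real.smoothTransition.zero_of_nonpos (by rw [div_nonpos_iff]; right; constructor <;> linarith)

theorem eta_nonneg (s : ℝ) : 0 ≤ eta s := Real.smoothTransition.nonneg _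
theorem eta_le_one (s : ℝ) : eta s ≤ 1 := Real.smoothTransition.le_one _

theorem eta_deriv_zero_lt {s : ℝ} (hs : s < 1) : deriv eta s = 0 := by
  have : eta =ᶠ[nhds s] fun _ => 1 := by
    filter_upwards [Iio_mem_nhds hs] with t ht
    exact eta_one (le_of_lt ht)
  rw [this.deriv_eq]; simp

theorem eta_deriv_zero_gt {s : ℝ} (hs : 4 < s) : deriv eta s = 0 := by
  have : eta =ᶠ[nhds s] fun _ => 0 := by
    filter_upwards [Ioi_mem_nhds hs] with t ht
    exact eta_zero (le_of_lt ht)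
  rw [this.deriv_eq]; simp

theorem eta_deriv_bound : ∃ C : ℝ, 0 ≤ C ∧ ∀ s, |deriv eta s| ≤ C := by
  obtain ⟨s₀, -, hs₀⟩ := (isCompact_Icc (a := (0:ℝ)) (b := 5)).exists_isMaxOn
    (Set.nonempty_Icc.2 (by norm_num))
    (((eta_contDiff.continuous_deriv (by exact_mod_cast le_top)).abs).continuousOn)
  refine ⟨|deriv eta s₀|, abs_nonneg _, fun s => ?_⟩
  rcases le_or_gt s 0 with h|h
  · rw [eta_deriv_zero_lt (by linarith)]; simpa using abs_nonneg _
  rcases le_or_gt 5 s with h'|h'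
  · rw [eta_deriv_zero_gt (by linarith)]; simpa using abs_nonneg _
  exact hs₀ ⟨le_of_lt h, le_of_lt h'⟩

noncomputable def zeta (R : ℝ) (p : ℝ×ℝ) : ℝ := eta ((p.1^2 + p.2^2)/R^2)

theorem arg_contDiff (R : ℝ) : ContDiff ℝ (⊤:ℕ∞) (fun p : ℝ×ℝ => (p.1^2 + p.2^2)/R^2) :=
  (((contDiff_fst.pow 2).add (contDiff_snd.pow 2)).div_const _)

theorem zeta_contDiff (R : ℝ) : ContDiff ℝ (⊤:ℕ∞) (zeta R) := by
  have h1 : ContDiff ℝ ((⊤:ℕ∞) : WithTop ℕ∞) eta := eta_contDiff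
  exact h1.comp (arg_contDiff R)

theorem zeta_contDiff' (R : ℝ) (n : ℕ) : ContDiff ℝ (n:ℕ∞) (zeta R) :=
  (zeta_contDiff R).of_le (by exact_mod_cast le_top)

theorem zeta_nonneg (R : ℝ) (p : ℝ×ℝ) : 0 ≤ zeta R p := eta_nonneg _
theorem zeta_le_one (R : ℝ) (p : ℝ×ℝ) : zeta R p ≤ 1 := eta_le_one _

theorem zeta_eq_one {R : ℝ} {p : ℝ×ℝ} (hp : (p.1^2 + p.2^2)/R^2 ≤ 1) : zeta R p = 1 :=
  eta_one hp

theorem zeta_eq_zero {R : ℝ} {p : ℝ×ℝ} (hp : 4 ≤ (p.1^2 + p.2^2)/R^2) : zeta R p = 0 :=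
  eta_zero hp

theorem Dd_zeta (R : ℝ) (v p : ℝ×ℝ) :
    Dd v (zeta R) p = deriv eta ((p.1^2 + p.2^2)/R^2) * ((2*p.1*v.1 + 2*p.2*v.2)/R^2) := by
  have := Dd_comp (g := eta) (f := fun q : ℝ×ℝ => (q.1^2 + q.2^2)/R^2) (p := p) (v := v)
    (eta_contDiff.differentiable (by simp) _)
    ((arg_contDiff R).differentiable (by simp) p)
  rw [show zeta R = fun q : ℝ×ℝ => eta ((q.1^2 + q.2^2)/R^2) from rfl, this, Dd_arg]

theorem Dd_zeta_zero_lt {R : ℝ} {p : ℝ×ℝ} (hp : (p.1^2 + p.2^2)/R^2 < 1) (v : ℝ×ℝ) :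
    Dd v (zeta R) p = 0 := by
  have hev : zeta R =ᶠ[nhds p] fun _ => 1 := by
    have hopen : IsOpen {q : ℝ×ℝ | (q.1^2 + q.2^2)/R^2 < 1} :=
      isOpen_lt (by fun_prop) continuous_const
    filter_upwards [hopen.mem_nhds hp] with q hq
    exact zeta_eq_one (le_of_lt hq)
  show fderiv ℝ (zeta R) p v = 0
  rw [hev.fderiv_eq]; simp

theorem Dd_zeta_zero_gt {R : ℝ} {p : ℝ×ℝ} (hp : 4 < (p.1^2 + p.2^2)/R^2) (v : ℝ×ℝ) :
    Dd v (zeta R) p = 0 := by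
  have hev : zeta R =ᶠ[nhds p] fun _ => 0 := by
    have hopen : IsOpen {q : ℝ×ℝ | 4 < (q.1^2 + q.2^2)/R^2} :=
      isOpen_lt continuous_const (by fun_prop)
    filter_upwards [hopen.mem_nhds hp] with q hq
    exact zeta_eq_zero (le_of_lt hq)
  show fderiv ℝ (zeta R) p v = 0
  rw [hev.fderiv_eq]; simp

theorem dist2_eq (p : ℝ×ℝ) : dist2 p (0,0) = Real.sqrt (p.1^2 + p.2^2) := by
  simp [dist2]

theorem sq_outside {R : ℝ} (hR : 0 < R) {p : ℝ×ℝ}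
    (hp : p ∉ Set.Icc ((-(2*R), -(2*R)) : ℝ×ℝ) ((2*R, 2*R) : ℝ×ℝ)) :
    4 < (p.1^2 + p.2^2)/R^2 := by
  rw [lt_div_iff₀ (by positivity)]
  by_contra hle; push_neg at hle
  apply hp
  rw [Set.mem_Icc]
  refine ⟨Prod.le_def.2 ⟨?_, ?_⟩, Prod.le_def.2 ⟨?_, ?_⟩⟩ <;>
    · simp only
      nlinarith [sq_nonneg p.1, sq_nonneg p.2, sq_nonneg (p.1 + 2*R), sq_nonneg (p.1 - 2*R),
        sq_nonneg (p.2 + 2*R), sq_nonneg (p.2 - 2*R)]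

theorem ann_lower {R : ℝ} (hR : 0 < R) {p : ℝ×ℝ} (h1 : 1 ≤ (p.1^2 + p.2^2)/R^2) :
    R ≤ dist2 p (0,0) := by
  rw [dist2_eq]
  have h2 : R^2 ≤ p.1^2 + p.2^2 := by
    rw [le_div_iff₀ (by positivity)] at h1; linarith
  calc R = Real.sqrt (R^2) := (Real.sqrt_sq hR.le).symm
  _ ≤ _ := Real.sqrt_le_sqrt h2

theorem ann_upper {R : ℝ} (hR : 0 < R) {p : ℝ×ℝ} (h4 : (p.1^2 + p.2^2)/R^2 ≤ 4) :
    dist2 p (0,0) ≤ 2*R := by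
  rw [dist2_eq]
  have h2 : p.1^2 + p.2^2 ≤ (2*R)^2 := by
    rw [div_le_iff₀ (by positivity)] at h4; nlinarith
  calc Real.sqrt (p.1^2+p.2^2) ≤ Real.sqrt ((2*R)^2) := Real.sqrt_le_sqrt h2
  _ = 2*R := Real.sqrt_sq (by positivity)

theorem Dd_zeta_sq_bound {R C : ℝ} (hR : 0 < R) (hC : ∀ s, |deriv eta s| ≤ C) {p : ℝ×ℝ}
    (hp : (p.1^2 + p.2^2)/R^2 ≤ 4) :
    (Dd (1,0) (zeta R) p)^2 + (Dd (0,1) (zeta R) p)^2 ≤ 32*C^2/R^2 := by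
  have hRne : R ≠ 0 := ne_of_gt hR
  have h4 : p.1^2 + p.2^2 ≤ 4*R^2 := by rw [div_le_iff₀ (by positivity)] at hp; linarith
  set d := deriv eta ((p.1^2 + p.2^2)/R^2) with hd
  have hd2 : d^2 ≤ C^2 := by
    have := hC ((p.1^2 + p.2^2)/R^2)
    nlinarith [abs_nonneg d, sq_abs d]
  have e1 : Dd (1,0) (zeta R) p = d * (2*p.1)/R^2 := by rw [Dd_zeta]; simp; ring
  have e2 : Dd (0,1) (zeta R) p = d * (2*p.2)/R^2 := by rw [Dd_zeta]; simp; ring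
  rw [e1, e2]
  rw [div_pow, div_pow, ← add_div, div_le_div_iff₀ (by positivity) (by positivity)]
  have key : d^2 * (p.1^2 + p.2^2) ≤ C^2 * (4*R^2) :=
    mul_le_mul hd2 h4 (by positivity) (by positivity)
  nlinarith [key, sq_nonneg R, hR, sq_nonneg d, sq_nonneg (R*R)]

theorem integrable_of_zero_outside {R : ℝ} (f : ℝ×ℝ → ℝ) (hf : Continuous f)
    (h0 : ∀ p : ℝ×ℝ, p ∉ Set.Icc ((-(2*R),-(2*R)):ℝ×ℝ) ((2*R,2*R):ℝ×ℝ) → f p = 0) :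
    MeasureTheory.Integrable f :=
  hf.integrable_of_hasCompactSupport (HasCompactSupport.intro isCompact_Icc h0)

section Cacc
variable {ψ h : ℝ×ℝ → ℝ} {R : ℝ}

theorem Dd_V (hψ2 : ContDiff ℝ ((2:ℕ):ℕ∞) ψ) (hh2 : ContDiff ℝ ((2:ℕ):ℕ∞) h)
    (v w p : ℝ×ℝ) :
    Dd v (fun q => (zeta R q)^2 * (ψ q)^2 * h q * Dd w h q) p =
      (zeta R p)^2*(ψ p)^2*h p * Dd v (Dd w h) p
      + Dd w h p * ((zeta R p)^2*(ψ p)^2*Dd v h p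
        + h p * (2*zeta R p*(ψ p)^2*Dd v (zeta R) p + 2*(zeta R p)^2*ψ p*Dd v ψ p)) := by
  have hzd : Differentiable ℝ (zeta R) :=
    (zeta_contDiff R).differentiable (by simp)
  have hψd : Differentiable ℝ ψ := hψ2.differentiable (by norm_cast)
  have hhd : Differentiable ℝ h := hh2.differentiable (by norm_cast)
  have hDwd : Differentiable ℝ (Dd w h) := Dd_differentiable le_rfl hh2
  simp only [pow_two]
  rw [Dd_mul (by fun_prop) (hDwd p)]
  rw [Dd_mul (by fun_prop) (hhd p)]
  rw [Dd_mul (by fun_prop) ((hψd p).fun_mul (hψd p))]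
  rw [Dd_mul (hzd p) (hzd p), Dd_mul (hψd p) (hψd p)]
  ring

theorem divV_eq (hψ2 : ContDiff ℝ ((2:ℕ):ℕ∞) ψ) (hh2 : ContDiff ℝ ((2:ℕ):ℕ∞) h)
    (hPDE : ∀ p, ψ p * (Dd (1,0) (Dd (1,0) h) p + Dd (0,1) (Dd (0,1) h) p)
      + 2*(Dd (1,0) ψ p * Dd (1,0) h p + Dd (0,1) ψ p * Dd (0,1) h p) = 0) (p : ℝ×ℝ) :
    Dd (1,0) (fun q => (zeta R q)^2 * (ψ q)^2 * h q * Dd (1,0) h q) p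
      + Dd (0,1) (fun q => (zeta R q)^2 * (ψ q)^2 * h q * Dd (0,1) h q) p
    = (zeta R p)^2*(ψ p)^2*((Dd (1,0) h p)^2 + (Dd (0,1) h p)^2)
      + 2*zeta R p*(ψ p)^2*h p*(Dd (1,0) (zeta R) p * Dd (1,0) h p
        + Dd (0,1) (zeta R) p * Dd (0,1) h p) := by
  rw [Dd_V hψ2 hh2, Dd_V hψ2 hh2]
  linear_combination ((zeta R p)^2 * ψ p * h p) * hPDE p
end Cacc

open MeasureTheory in
theorem caccioppoli_divergence {ψ h : ℝ×ℝ → ℝ} {R : ℝ} (hR : 0 < R)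
    (hψ2 : ContDiff ℝ ((2:ℕ):ℕ∞) ψ) (hh2 : ContDiff ℝ ((2:ℕ):ℕ∞) h)
    (hPDE : ∀ p, ψ p * (Dd (1,0) (Dd (1,0) h) p + Dd (0,1) (Dd (0,1) h) p)
      + 2*(Dd (1,0) ψ p * Dd (1,0) h p + Dd (0,1) ψ p * Dd (0,1) h p) = 0) :
    ∫ p : ℝ×ℝ, ((zeta R p)^2*(ψ p)^2*((Dd (1,0) h p)^2 + (Dd (0,1) h p)^2)
      + 2*zeta R p*(ψ p)^2*h p*(Dd (1,0) (zeta R) p * Dd (1,0) h p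
        + Dd (0,1) (zeta R) p * Dd (0,1) h p)) = 0 := by
  set V₁ : ℝ×ℝ → ℝ := fun q => (zeta R q)^2 * (ψ q)^2 * h q * Dd (1,0) h q with hV₁
  set V₂ : ℝ×ℝ → ℝ := fun q => (zeta R q)^2 * (ψ q)^2 * h q * Dd (0,1) h q with hV₂
  have hzC : ∀ n : ℕ, ContDiff ℝ (n:ℕ∞) (zeta R) := zeta_contDiff' R
  have hzd : Differentiable ℝ (zeta R) := ((hzC 1).differentiable (by norm_cast))
  have hψd : Differentiable ℝ ψ := hψ2.differentiable (by norm_cast)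
  have hhd : Differentiable ℝ h := hh2.differentiable (by norm_cast)
  have hψ1 : ContDiff ℝ ((1:ℕ):ℕ∞) ψ := hψ2.of_le (by norm_cast)
  have hh1 : ContDiff ℝ ((1:ℕ):ℕ∞) h := hh2.of_le (by norm_cast)
  have hV₁C : ContDiff ℝ ((1:ℕ):ℕ∞) V₁ :=
    ((((hzC 1).pow 2).mul (hψ1.pow 2)).mul hh1).mul (Dd_contDiff (by norm_num) hh2)
  have hV₂C : ContDiff ℝ ((1:ℕ):ℕ∞) V₂ :=
    ((((hzC 1).pow 2).mul (hψ1.pow 2)).mul hh1).mul (Dd_contDiff (by norm_num) hh2)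
  have hV₁d : Differentiable ℝ V₁ := hV₁C.differentiable (by norm_cast)
  have hV₂d : Differentiable ℝ V₂ := hV₂C.differentiable (by norm_cast)
  have hle : ((-(3*R),-(3*R)):ℝ×ℝ) ≤ ((3*R,3*R):ℝ×ℝ) :=
    Prod.le_def.2 ⟨by simp; linarith, by simp; linarith⟩
  have hdivcont : Continuous (fun x : ℝ×ℝ => fderiv ℝ V₁ x (1,0) + fderiv ℝ V₂ x (0,1)) := by
    exact (Dd_continuous le_rfl hV₁C).add (Dd_continuous le_rfl hV₂C)
  have hzero : ∀ p : ℝ×ℝ, 4 ≤ (p.1^2+p.2^2)/R^2 → V₁ p = 0 ∧ V₂ p = 0 := by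
    intro p hp
    constructor <;> simp [hV₁, hV₂, zeta_eq_zero hp]
  have hbd : ∀ x : ℝ, 3*R ≤ |x| → ∀ y : ℝ, 4 ≤ ((x^2+y^2)/R^2) ∧ 4 ≤ ((y^2+x^2)/R^2) := by
    intro x hx y
    have h9 : 9*R^2 ≤ x^2 := by nlinarith [abs_nonneg x, sq_abs x]
    constructor <;> · rw [le_div_iff₀ (by positivity)]; nlinarith [sq_nonneg y]
  have key := integral_divergence_prod_Icc_of_hasFDerivAt_off_countable_of_le
    V₁ V₂ (fun p => fderiv ℝ V₁ p) (fun p => fderiv ℝ V₂ p)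
    ((-(3*R),-(3*R)):ℝ×ℝ) ((3*R,3*R):ℝ×ℝ) hle ∅ Set.countable_empty
    hV₁C.continuous.continuousOn hV₂C.continuous.continuousOn
    (fun x _ => (hV₁d x).hasFDerivAt) (fun x _ => (hV₂d x).hasFDerivAt)
    (hdivcont.continuousOn.integrableOn_compact isCompact_Icc)
  -- boundary terms vanish
  have hb1 : (∫ x in (-(3*R),-(3*R)).1..((3*R,3*R):ℝ×ℝ).1, V₂ (x, ((3*R,3*R):ℝ×ℝ).2)) = 0 := by
    rw [intervalIntegral.integral_congr (g := fun _ => (0:ℝ))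
      (fun x _ => (hzero (x, 3*R) (by simpa using (hbd (3*R) (by rw [abs_of_pos (by linarith)]) x).2)).2)]
    simp
  have hb2 : (∫ x in (-(3*R),-(3*R)).1..((3*R,3*R):ℝ×ℝ).1, V₂ (x, ((-(3*R),-(3*R)):ℝ×ℝ).2)) = 0 := by
    rw [intervalIntegral.integral_congr (g := fun _ => (0:ℝ))
      (fun x _ => (hzero (x, -(3*R)) (by simpa using (hbd (-(3*R)) (by rw [abs_of_neg (by linarith)]; linarith) x).2)).2)]
    simp
  have hb3 : (∫ y in (-(3*R),-(3*R)).2..((3*R,3*R):ℝ×ℝ).2, V₁ (((3*R,3*R):ℝ×ℝ).1, y)) = 0 := by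
    rw [intervalIntegral.integral_congr (g := fun _ => (0:ℝ))
      (fun y _ => (hzero (3*R, y) (by simpa using (hbd (3*R) (by rw [abs_of_pos (by linarith)]) y).1)).1)]
    simp
  have hb4 : (∫ y in (-(3*R),-(3*R)).2..((3*R,3*R):ℝ×ℝ).2, V₁ (((-(3*R),-(3*R)):ℝ×ℝ).1, y)) = 0 := by
    rw [intervalIntegral.integral_congr (g := fun _ => (0:ℝ))
      (fun y _ => (hzero (-(3*R), y) (by simpa using (hbd (-(3*R)) (by rw [abs_of_neg (by linarith)]; linarith) y).1)).1)]
    simp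
  rw [hb1, hb2, hb3, hb4] at key
  simp only [sub_zero, add_zero, sub_self] at key
  -- key : ∫ p in Icc .. , fderiv V₁ p (1,0) + fderiv V₂ p (0,1) = 0
  have hdiveq : (fun p : ℝ×ℝ => fderiv ℝ V₁ p (1,0) + fderiv ℝ V₂ p (0,1))
      = fun p : ℝ×ℝ => ((zeta R p)^2*(ψ p)^2*((Dd (1,0) h p)^2 + (Dd (0,1) h p)^2)
      + 2*zeta R p*(ψ p)^2*h p*(Dd (1,0) (zeta R) p * Dd (1,0) h p
        + Dd (0,1) (zeta R) p * Dd (0,1) h p)) := by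
    funext p
    exact divV_eq hψ2 hh2 hPDE p
  rw [hdiveq] at key
  have hsupp := setIntegral_eq_integral_of_forall_compl_eq_zero
    (μ := (volume : Measure (ℝ×ℝ)))
    (s := Set.Icc ((-(3*R),-(3*R)):ℝ×ℝ) ((3*R,3*R):ℝ×ℝ))
    (f := fun p : ℝ×ℝ => ((zeta R p)^2*(ψ p)^2*((Dd (1,0) h p)^2 + (Dd (0,1) h p)^2)
      + 2*zeta R p*(ψ p)^2*h p*(Dd (1,0) (zeta R) p * Dd (1,0) h p
        + Dd (0,1) (zeta R) p * Dd (0,1) h p))) ?_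
  · rw [← hsupp]
    exact key
  intro p hp
  have h4 : 4 < (p.1^2+p.2^2)/R^2 := by
    have hmem : p ∉ Set.Icc ((-(2*R), -(2*R)) : ℝ×ℝ) ((2*R, 2*R) : ℝ×ℝ) := by
      intro hin
      exact hp (Set.Icc_subset_Icc
        (Prod.le_def.2 ⟨by simp; linarith, by simp; linarith⟩)
        (Prod.le_def.2 ⟨by simp; linarith, by simp; linarith⟩) hin)
    exact sq_outside hR hmem
  simp only [zeta_eq_zero (le_of_lt h4)]
  ring

open MeasureTheory in
theorem caccioppoli_bound {ψ h φ : ℝ×ℝ → ℝ} {R C ε : ℝ} (hR : 0 < R) (hε : 0 ≤ ε)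
    (hψ2 : ContDiff ℝ ((2:ℕ):ℕ∞) ψ) (hh2 : ContDiff ℝ ((2:ℕ):ℕ∞) h)
    (hPDE : ∀ p, ψ p * (Dd (1,0) (Dd (1,0) h) p + Dd (0,1) (Dd (0,1) h) p)
      + 2*(Dd (1,0) ψ p * Dd (1,0) h p + Dd (0,1) ψ p * Dd (0,1) h p) = 0)
    (hC0 : 0 ≤ C) (hC : ∀ s, |deriv eta s| ≤ C)
    (hφeq : ∀ p, φ p = h p * ψ p)
    (hann : ∀ p : ℝ×ℝ, 1 ≤ (p.1^2+p.2^2)/R^2 → (p.1^2+p.2^2)/R^2 ≤ 4 → |φ p| ≤ ε) :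
    ∫ p : ℝ×ℝ, (zeta R p)^2*(ψ p)^2*((Dd (1,0) h p)^2 + (Dd (0,1) h p)^2)
      ≤ 2048*C^2*ε^2 := by
  set P : ℝ×ℝ → ℝ := fun p => (zeta R p)^2*(ψ p)^2*((Dd (1,0) h p)^2 + (Dd (0,1) h p)^2)
    with hPdef
  set Q : ℝ×ℝ → ℝ := fun p => 2*zeta R p*(ψ p)^2*h p*(Dd (1,0) (zeta R) p * Dd (1,0) h p
        + Dd (0,1) (zeta R) p * Dd (0,1) h p) with hQdef
  set S : ℝ×ℝ → ℝ := fun p => 2*(φ p)^2*((Dd (1,0) (zeta R) p)^2 + (Dd (0,1) (zeta R) p)^2)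
    with hSdef
  have hzc : Continuous (zeta R) := (zeta_contDiff R).continuous
  have hψc : Continuous ψ := hψ2.continuous
  have hhc : Continuous h := hh2.continuous
  have hDh1c : Continuous (Dd (1,0) h) := Dd_continuous (le_refl 1) (hh2.of_le (by norm_cast))
  have hDh2c : Continuous (Dd (0,1) h) := Dd_continuous (le_refl 1) (hh2.of_le (by norm_cast))
  have hDz1c : Continuous (Dd (1,0) (zeta R)) := Dd_continuous (le_refl 1) (zeta_contDiff' R 1)
  have hDz2c : Continuous (Dd (0,1) (zeta R)) := Dd_continuous (le_refl 1) (zeta_contDiff' R 1)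
  have hφc : Continuous φ := by
    have : φ = fun p => h p * ψ p := funext hφeq
    rw [this]; exact hhc.mul hψc
  have hPc : Continuous P := by fun_prop
  have hQc : Continuous Q := by fun_prop
  have hSc : Continuous S := by fun_prop
  have hPout : ∀ p : ℝ×ℝ, p ∉ Set.Icc ((-(2*R),-(2*R)):ℝ×ℝ) ((2*R,2*R):ℝ×ℝ) → P p = 0 := by
    intro p hp
    simp only [hPdef, zeta_eq_zero (le_of_lt (sq_outside hR hp))]
    ring
  have hQout : ∀ p : ℝ×ℝ, p ∉ Set.Icc ((-(2*R),-(2*R)):ℝ×ℝ) ((2*R,2*R):ℝ×ℝ) → Q p = 0 := by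
    intro p hp
    simp only [hQdef, zeta_eq_zero (le_of_lt (sq_outside hR hp))]
    ring
  have hSout : ∀ p : ℝ×ℝ, p ∉ Set.Icc ((-(2*R),-(2*R)):ℝ×ℝ) ((2*R,2*R):ℝ×ℝ) → S p = 0 := by
    intro p hp
    simp only [hSdef, Dd_zeta_zero_gt (sq_outside hR hp)]
    ring
  have hPint : Integrable P := integrable_of_zero_outside P hPc hPout
  have hQint : Integrable Q := integrable_of_zero_outside Q hQc hQout
  have hSint : Integrable S := integrable_of_zero_outside S hSc hSout
  -- divergence theorem
  have hdiv : ∫ p : ℝ×ℝ, (P p + Q p) = 0 := caccioppoli_divergence hR hψ2 hh2 hPDE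
  rw [integral_add hPint hQint] at hdiv
  -- pointwise AM-GM
  have hptwise : ∀ p, -Q p ≤ (1/2) * P p + S p := by
    intro p
    have hφp := hφeq p
    simp only [hPdef, hQdef, hSdef]
    rw [hφp]
    nlinarith [sq_nonneg (zeta R p * ψ p * Dd (1,0) h p + 2 * ψ p * h p * Dd (1,0) (zeta R) p),
      sq_nonneg (zeta R p * ψ p * Dd (0,1) h p + 2 * ψ p * h p * Dd (0,1) (zeta R) p),
      sq_nonneg (ψ p * h p)]
  have hmono : ∫ p : ℝ×ℝ, -Q p ≤ ∫ p : ℝ×ℝ, ((1/2) * P p + S p) :=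
    integral_mono hQint.neg ((hPint.const_mul _).add hSint) hptwise
  rw [integral_neg, integral_add (hPint.const_mul _) hSint, integral_const_mul] at hmono
  -- ∫ P ≤ 2 ∫ S
  have hPS : ∫ p : ℝ×ℝ, P p ≤ 2 * ∫ p : ℝ×ℝ, S p := by linarith
  -- bound ∫ S
  have hSsupp : ∫ p : ℝ×ℝ, S p
      = ∫ p in Set.Icc ((-(2*R),-(2*R)):ℝ×ℝ) ((2*R,2*R):ℝ×ℝ), S p :=
    (setIntegral_eq_integral_of_forall_compl_eq_zero hSout).symm
  have hvol : (volume (Set.Icc ((-(2*R),-(2*R)):ℝ×ℝ) ((2*R,2*R):ℝ×ℝ))).toReal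
      = 16 * R^2 := by
    rw [Set.Icc_prod_eq]
    rw [show (volume : Measure (ℝ×ℝ)) = (volume : Measure ℝ).prod volume from rfl]
    rw [Measure.prod_prod]
    simp only [Real.volume_Icc]
    rw [ENNReal.toReal_mul, ENNReal.toReal_ofReal (by linarith)]
    ring
  have hSbound : ∀ p ∈ Set.Icc ((-(2*R),-(2*R)):ℝ×ℝ) ((2*R,2*R):ℝ×ℝ),
      ‖S p‖ ≤ 64*C^2*ε^2/R^2 := by
    intro p _
    rw [Real.norm_eq_abs, abs_of_nonneg (by positivity)]
    rcases lt_or_ge ((p.1^2+p.2^2)/R^2) 1 with hlt|hge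
    · simp only [hSdef, Dd_zeta_zero_lt hlt]
      rw [show (2:ℝ)*(φ p)^2*(0^2+0^2) = 0 by ring]
      positivity
    rcases lt_or_ge 4 ((p.1^2+p.2^2)/R^2) with hgt|hle4
    · simp only [hSdef, Dd_zeta_zero_gt hgt]
      rw [show (2:ℝ)*(φ p)^2*(0^2+0^2) = 0 by ring]
      positivity
    · have h1 := hann p hge hle4
      have h2 := Dd_zeta_sq_bound hR hC hle4
      have hφsq : (φ p)^2 ≤ ε^2 := by nlinarith [abs_nonneg (φ p), sq_abs (φ p)]
      have hDznn : 0 ≤ (Dd (1,0) (zeta R) p)^2 + (Dd (0,1) (zeta R) p)^2 := by positivity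
      simp only [hSdef]
      calc 2*(φ p)^2*((Dd (1,0) (zeta R) p)^2 + (Dd (0,1) (zeta R) p)^2)
          ≤ 2*ε^2*(32*C^2/R^2) := by
            have := mul_le_mul hφsq h2 hDznn (by positivity)
            nlinarith [this]
      _ = 64*C^2*ε^2/R^2 := by ring
  have hSle : ∫ p : ℝ×ℝ, S p ≤ 64*C^2*ε^2/R^2 * (16 * R^2) := by
    rw [hSsupp, ← hvol]
    calc ∫ p in Set.Icc ((-(2*R),-(2*R)):ℝ×ℝ) ((2*R,2*R):ℝ×ℝ), S p
        ≤ |∫ p in Set.Icc ((-(2*R),-(2*R)):ℝ×ℝ) ((2*R,2*R):ℝ×ℝ), S p| := le_abs_self _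
    _ ≤ 64*C^2*ε^2/R^2 *
        (volume (Set.Icc ((-(2*R),-(2*R)):ℝ×ℝ) ((2*R,2*R):ℝ×ℝ))).toReal := by
        have := norm_setIntegral_le_of_norm_le_const
          (μ := (volume : Measure (ℝ×ℝ)))
          (s := Set.Icc ((-(2*R),-(2*R)):ℝ×ℝ) ((2*R,2*R):ℝ×ℝ))
          (f := S) (C := 64*C^2*ε^2/R^2)
          (isCompact_Icc.measure_lt_top) hSbound
        rw [Real.norm_eq_abs] at this
        exact this
  have hfin : 64*C^2*ε^2/R^2 * (16 * R^2) = 1024*C^2*ε^2 := by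
    field_simp
    ring
  rw [hfin] at hSle
  simp only [hPdef] at hPS ⊢
  linarith

theorem arith_contra {X T : ℝ} (hX : 0 < X) (hT : 0 ≤ T)
    (hle : X ≤ T * (X/(2*(T+1)))) : False := by
  have h1 : T * (X/(2*(T+1))) < X := by
    rw [mul_div_assoc', div_lt_iff₀ (by positivity)]
    nlinarith [mul_nonneg hT hX.le]
  linarith

/-- If `u` is a `C³` solution of `Δu = F'(u)` on the plane with
`∂_y u > 0`, and `∂_x u` is bounded with `sup_{R ≤ |x| ≤ 2R} |∂_x u| → 0` as
`R → ∞`, then `∂_x u = c ∂_y u` for some constant `c`. -/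
theorem liouville_ratio_constant
    (F : ℝ → ℝ) (hF : ContDiff ℝ (⊤ : ℕ∞) F)
    (u : ℝ × ℝ → ℝ) (hu : ContDiff ℝ 3 u)
    (hsol : ∀ p : ℝ × ℝ, lap u p = deriv F (u p))
    (hmono : ∀ p : ℝ × ℝ, 0 < pdy u p)
    (hbdd : ∃ M : ℝ, ∀ p : ℝ × ℝ, |pdx u p| ≤ M)
    (hdecay : ∀ ε > (0:ℝ), ∃ R₀ : ℝ, ∀ R ≥ R₀, ∀ p : ℝ × ℝ,
      R ≤ dist2 p (0, 0) → dist2 p (0, 0) ≤ 2 * R → |pdx u p| ≤ ε) :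
    ∃ c : ℝ, ∀ p : ℝ × ℝ, pdx u p = c * pdy u p := by
  have hu3 : ContDiff ℝ ((3:ℕ):ℕ∞) u := by exact_mod_cast hu
  have hu2 : ContDiff ℝ ((2:ℕ):ℕ∞) u := hu3.of_le (by norm_cast)
  have hud : Differentiable ℝ u := hu2.differentiable (by norm_cast)
  set φ : ℝ×ℝ → ℝ := Dd (1,0) u with hφdef
  set ψ : ℝ×ℝ → ℝ := Dd (0,1) u with hψdef
  have hφ2 : ContDiff ℝ ((2:ℕ):ℕ∞) φ := Dd_contDiff (by norm_num) hu3
  have hψ2 : ContDiff ℝ ((2:ℕ):ℕ∞) ψ := Dd_contDiff (by norm_num) hu3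
  have hφd : Differentiable ℝ φ := hφ2.differentiable (by norm_cast)
  have hψd : Differentiable ℝ ψ := hψ2.differentiable (by norm_cast)
  have hpdxu : pdx u = φ := funext fun q => pdx_eq (hud q)
  have hpdyu : pdy u = ψ := funext fun q => pdy_eq (hud q)
  have hψpos : ∀ p, 0 < ψ p := fun p => by
    have := hmono p; rwa [hpdyu] at this
  have hψne : ∀ p, ψ p ≠ 0 := fun p => ne_of_gt (hψpos p)
  -- the linearized equation satisfied by φ and ψ
  have hF' : ContDiff ℝ ((⊤:ℕ∞) : WithTop ℕ∞) (deriv F) := by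
    have h1 : ContDiff ℝ (((⊤:ℕ∞) : WithTop ℕ∞) + 1) F := hF.of_le (by simp)
    exact (contDiff_succ_iff_deriv.1 h1).2.2
  have hF'' : Differentiable ℝ (deriv F) :=
    hF'.differentiable (by simp)
  have A : (fun q => Dd (1,0) φ q + Dd (0,1) ψ q) = (fun q => deriv F (u q)) := by
    funext q
    have := hsol q
    rw [lap, hpdxu, hpdyu, pdx_eq (hφd q), pdy_eq (hψd q)] at this
    exact this
  have hDφψ : Dd (0,1) φ = Dd (1,0) ψ := funext fun q => (Dd_comm hu2 (0,1) (1,0) q)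
  have PDE1 : ∀ p, Dd (1,0) (Dd (1,0) φ) p + Dd (0,1) (Dd (0,1) φ) p
      = deriv (deriv F) (u p) * φ p := by
    intro p
    have h1 : Dd (1,0) (fun q => Dd (1,0) φ q + Dd (0,1) ψ q) p
        = Dd (1,0) (fun q => deriv F (u q)) p := by rw [A]
    rw [Dd_add (Dd_differentiable le_rfl hφ2 p) (Dd_differentiable le_rfl hψ2 p),
      Dd_comp (hF'' (u p)) (hud p)] at h1
    have hc1 : Dd (1,0) (Dd (0,1) ψ) p = Dd (0,1) (Dd (1,0) ψ) p := Dd_comm hψ2 _ _ p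
    have hc2 : Dd (1,0) ψ = Dd (0,1) φ := hDφψ.symm
    rw [hc1, hc2] at h1
    exact h1
  have PDE2 : ∀ p, Dd (1,0) (Dd (1,0) ψ) p + Dd (0,1) (Dd (0,1) ψ) p
      = deriv (deriv F) (u p) * ψ p := by
    intro p
    have h1 : Dd (0,1) (fun q => Dd (1,0) φ q + Dd (0,1) ψ q) p
        = Dd (0,1) (fun q => deriv F (u q)) p := by rw [A]
    rw [Dd_add (Dd_differentiable le_rfl hφ2 p) (Dd_differentiable le_rfl hψ2 p),
      Dd_comp (hF'' (u p)) (hud p)] at h1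
    have hc1 : Dd (0,1) (Dd (1,0) φ) p = Dd (1,0) (Dd (0,1) φ) p := Dd_comm hφ2 _ _ p
    rw [hc1, hDφψ] at h1
    exact h1
  -- the quotient h
  set h : ℝ×ℝ → ℝ := fun p => φ p / ψ p with hhdef
  have hh2 : ContDiff ℝ ((2:ℕ):ℕ∞) h := hφ2.div hψ2 hψne
  have hhd : Differentiable ℝ h := hh2.differentiable (by norm_cast)
  have hφeq : ∀ q, φ q = h q * ψ q := fun q =>
    (div_mul_cancel₀ (φ q) (hψne q)).symm
  have hφfun : φ = fun q => h q * ψ q := funext hφeq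
  -- expansion of derivatives of φ
  have hDφ : ∀ v : ℝ×ℝ, Dd v φ = fun q => h q * Dd v ψ q + ψ q * Dd v h q := by
    intro v; funext q
    rw [show Dd v φ q = Dd v (fun q => h q * ψ q) q from by rw [← hφfun]]
    exact Dd_mul (hhd q) (hψd q)
  have PDEh : ∀ p, ψ p * (Dd (1,0) (Dd (1,0) h) p + Dd (0,1) (Dd (0,1) h) p)
      + 2*(Dd (1,0) ψ p * Dd (1,0) h p + Dd (0,1) ψ p * Dd (0,1) h p) = 0 := by
    intro p
    have e1exp : Dd (1,0) (Dd (1,0) φ) p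
        = h p * Dd (1,0) (Dd (1,0) ψ) p + Dd (1,0) ψ p * Dd (1,0) h p
          + (ψ p * Dd (1,0) (Dd (1,0) h) p + Dd (1,0) h p * Dd (1,0) ψ p) := by
      rw [hDφ (1,0)]
      rw [Dd_add ((hhd p).fun_mul (Dd_differentiable le_rfl hψ2 p))
        ((hψd p).fun_mul (Dd_differentiable le_rfl hh2 p)),
        Dd_mul (hhd p) (Dd_differentiable le_rfl hψ2 p),
        Dd_mul (hψd p) (Dd_differentiable le_rfl hh2 p)]
    have e2exp : Dd (0,1) (Dd (0,1) φ) p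
        = h p * Dd (0,1) (Dd (0,1) ψ) p + Dd (0,1) ψ p * Dd (0,1) h p
          + (ψ p * Dd (0,1) (Dd (0,1) h) p + Dd (0,1) h p * Dd (0,1) ψ p) := by
      rw [hDφ (0,1)]
      rw [Dd_add ((hhd p).fun_mul (Dd_differentiable le_rfl hψ2 p))
        ((hψd p).fun_mul (Dd_differentiable le_rfl hh2 p)),
        Dd_mul (hhd p) (Dd_differentiable le_rfl hψ2 p),
        Dd_mul (hψd p) (Dd_differentiable le_rfl hh2 p)]
    have h1 := PDE1 p
    rw [e1exp, e2exp, hφeq p] at h1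
    have h2 := PDE2 p
    linear_combination h1 - h p * h2
  obtain ⟨C, hC0, hC⟩ := eta_deriv_bound
  have hψc : Continuous ψ := hψ2.continuous
  have hDh1c : Continuous (Dd (1,0) h) := Dd_continuous (le_refl 1) (hh2.of_le (by norm_cast))
  have hDh2c : Continuous (Dd (0,1) h) := Dd_continuous (le_refl 1) (hh2.of_le (by norm_cast))
  -- the Caccioppoli estimate, with cutoff at any sufficiently large scale R
  have main : ∀ ε : ℝ, 0 < ε → ∀ ρ : ℝ, ∃ R : ℝ, 0 < R ∧ ρ ≤ R ∧
      ∫ p : ℝ×ℝ, (zeta R p)^2*(ψ p)^2*((Dd (1,0) h p)^2 + (Dd (0,1) h p)^2)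
        ≤ 2048*C^2*ε^2 := by
    intro ε hε ρ
    obtain ⟨R₀, hR₀⟩ := hdecay ε hε
    set R : ℝ := max R₀ (max ρ 1) with hRdef
    have hR1 : (1:ℝ) ≤ R := le_trans (le_max_right ρ 1) (le_max_right R₀ _)
    have hRpos : 0 < R := lt_of_lt_of_le one_pos hR1
    refine ⟨R, hRpos, le_trans (le_max_left ρ 1) (le_max_right R₀ _), ?_⟩
    refine caccioppoli_bound hRpos hε.le hψ2 hh2 PDEh hC0 hC hφeq ?_
    intro p h1 h4
    have := hR₀ R (le_max_left _ _) p (ann_lower hRpos h1) (ann_upper hRpos h4)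
    rwa [hpdxu] at this
  -- the gradient of h vanishes identically
  have hDh0 : ∀ q : ℝ×ℝ, Dd (1,0) h q = 0 ∧ Dd (0,1) h q = 0 := by
    intro q
    by_contra hne
    set G : ℝ×ℝ → ℝ := fun p => (ψ p)^2*((Dd (1,0) h p)^2 + (Dd (0,1) h p)^2) with hGdef
    have hGc : Continuous G := (hψc.pow 2).mul ((hDh1c.pow 2).add (hDh2c.pow 2))
    have hGq : 0 < G q := by
      have hsum : 0 < (Dd (1,0) h q)^2 + (Dd (0,1) h q)^2 := by
        rcases not_and_or.mp hne with h'|h'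
        · positivity
        · positivity
      exact mul_pos (pow_pos (hψpos q) 2) hsum
    obtain ⟨δ, hδ, hball⟩ := Metric.continuousAt_iff.1 hGc.continuousAt (G q / 2) (by linarith)
    have hGlow : ∀ p ∈ Metric.ball q δ, G q / 2 ≤ G p := by
      intro p hp
      have := hball (Metric.mem_ball.mp hp)
      rw [Real.dist_eq] at this
      have := abs_lt.mp this
      linarith [this.1]
    set v : ℝ := (volume (Metric.ball q δ)).toReal with hvdef
    have hvpos : 0 < v := ENNReal.toReal_pos (ne_of_gt (Metric.measure_ball_pos volume q hδ))
      (measure_ball_lt_top).ne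
    set X : ℝ := G q / 2 * v with hXdef
    have hXpos : 0 < X := by positivity
    set T : ℝ := 2048*C^2 with hTdef
    have hT0 : 0 ≤ T := by positivity
    set ε' : ℝ := Real.sqrt (X / (2*(T+1))) with hε'def
    have hε'pos : 0 < ε' := Real.sqrt_pos.2 (by positivity)
    have hε'sq : ε'^2 = X / (2*(T+1)) := Real.sq_sqrt (by positivity)
    set B : ℝ := |q.1| + |q.2| + δ with hBdef
    have hB0 : 0 < B := by have := abs_nonneg q.1; have := abs_nonneg q.2; linarith
    obtain ⟨R, hRpos, hRge, hint⟩ := main ε' hε'pos (2*B+1)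
    set P : ℝ×ℝ → ℝ := fun p => (zeta R p)^2*(ψ p)^2*((Dd (1,0) h p)^2 + (Dd (0,1) h p)^2)
      with hPdef
    have hPc : Continuous P :=
      (((zeta_contDiff R).continuous.pow 2).mul (hψc.pow 2)).mul
        ((hDh1c.pow 2).add (hDh2c.pow 2))
    have hPint : MeasureTheory.Integrable P := by
      refine integrable_of_zero_outside (R := R) P hPc ?_
      intro p hp
      simp only [hPdef, zeta_eq_zero (le_of_lt (sq_outside hRpos hp))]
      ring
    have hz1 : ∀ p ∈ Metric.ball q δ, zeta R p = 1 := by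
      intro p hp
      have hd : dist p q < δ := Metric.mem_ball.mp hp
      have h1 : |p.1 - q.1| < δ := by
        have := le_max_left (dist p.1 q.1) (dist p.2 q.2)
        rw [Prod.dist_eq] at hd
        simp only [Real.dist_eq] at hd this
        linarith [lt_of_le_of_lt this hd]
      have h2 : |p.2 - q.2| < δ := by
        have := le_max_right (dist p.1 q.1) (dist p.2 q.2)
        rw [Prod.dist_eq] at hd
        simp only [Real.dist_eq] at hd this
        linarith [lt_of_le_of_lt this hd]
      have hp1 : |p.1| ≤ B := by
        have := abs_sub_abs_le_abs_sub p.1 q.1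
        simp only [hBdef]
        have hd2 : 0 ≤ |q.2| := abs_nonneg _
        linarith
      have hp2 : |p.2| ≤ B := by
        have := abs_sub_abs_le_abs_sub p.2 q.2
        simp only [hBdef]
        have hd1 : 0 ≤ |q.1| := abs_nonneg _
        linarith
      apply zeta_eq_one
      rw [div_le_one (by positivity)]
      have hRB : 2*B+1 ≤ R := hRge
      nlinarith [sq_abs p.1, sq_abs p.2, abs_nonneg p.1, abs_nonneg p.2, sq_nonneg (|p.1| - |p.2|)]
    have hPeqG : ∀ p ∈ Metric.ball q δ, G q / 2 ≤ P p := by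
      intro p hp
      have : P p = G p := by simp only [hPdef, hGdef, hz1 p hp]; ring
      rw [this]
      exact hGlow p hp
    have hlow : G q / 2 * v ≤ ∫ p in Metric.ball q δ, P p := by
      rw [hvdef]
      exact MeasureTheory.setIntegral_ge_of_const_le_real measurableSet_ball
        (measure_ball_lt_top).ne hPeqG hPint.integrableOn
    have hmid : ∫ p in Metric.ball q δ, P p ≤ ∫ p : ℝ×ℝ, P p :=
      MeasureTheory.setIntegral_le_integral hPint
        (Filter.Eventually.of_forall fun p => by positivity)
    have hfinal : X ≤ T * ε'^2 := by
      simp only [hPdef] at hlow hmid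
      calc X = G q / 2 * v := hXdef
      _ ≤ ∫ p : ℝ×ℝ, (zeta R p)^2*(ψ p)^2*((Dd (1,0) h p)^2 + (Dd (0,1) h p)^2) :=
          le_trans hlow hmid
      _ ≤ T * ε'^2 := hint
    rw [hε'sq] at hfinal
    exact arith_contra hXpos hT0 hfinal
  -- h is constant
  have hfz : ∀ p : ℝ×ℝ, fderiv ℝ h p = 0 := by
    intro p
    obtain ⟨h1, h2⟩ := hDh0 p
    have h1' : fderiv ℝ h p (1,0) = 0 := h1
    have h2' : fderiv ℝ h p (0,1) = 0 := h2
    apply ContinuousLinearMap.ext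
    intro w
    have hw : (w : ℝ×ℝ) = w.1 • ((1:ℝ),(0:ℝ)) + w.2 • ((0:ℝ),(1:ℝ)) := by
      apply Prod.ext <;> simp
    rw [hw, map_add, ContinuousLinearMap.map_smul, ContinuousLinearMap.map_smul, h1', h2']
    simp
  have hconst := is_const_of_fderiv_eq_zero hhd hfz
  refine ⟨h (0,0), fun p => ?_⟩
  rw [hpdxu, hpdyu, hφeq p, hconst p (0,0)]
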